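/- With the setup of the H-join and its associated matrix W̃: a vector v whose i-th block is v_i = W_{G_i} α_i is an eigenvector of A(G) with eigenvalue ρ if and only if (α_1,…,α_p) is an eigenvector of W̃ with eigenvalue ρ. -/

import Mathlib

/-!
Stack the walk matrices into `W = diag(W_{G_1}, …, W_{G_p})`, so that `v = W α`. Since `W` has
full column rank, the theorem reduces to the intertwining relation `A(G) W = W W̃`. On a diagonal
block this is `A(G_i) W_{G_i} = W_{G_i} C(m_{G_i})`, which holds because `m_{G_i}(A(G_i))` kills
the all-ones vector `j`: expanding `j` in an orthonormal eigenbasis of `A(G_i)`, only eigenvectors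
of main eigenvalues occur. An off-diagonal block of `A(G)` is `δ_{ij}(H) J`, and
`J W_{G_j} = j jᵀ W_{G_j} = W_{G_i} M_{ij}` because the first column of `W_{G_i}` is `j`.
-/

open Matrix

/-- The `H`-join of the family of graphs `G i`. -/
def SimpleGraph.hJoin {p : ℕ} (H : SimpleGraph (Fin p)) (n : Fin p → ℕ)
    (G : ∀ i, SimpleGraph (Fin (n i))) : SimpleGraph ((i : Fin p) × Fin (n i)) where
  Adj x y := if h : x.1 = y.1 then (G x.1).Adj x.2 (Fin.cast (congrArg n h.symm) y.2)
             else H.Adj x.1 y.1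
  symm := by
    constructor
    rintro ⟨i, a⟩ ⟨k, b⟩ hadj
    dsimp at *
    by_cases h : i = k
    · subst h
      rw [dif_pos rfl] at hadj ⊢
      simpa using ((G i).adj_symm (by simpa using hadj))
    · rw [dif_neg h] at hadj
      rw [dif_neg (Ne.symm h)]
      exact H.adj_symm hadj
  loopless := by
    constructor
    rintro ⟨i, a⟩ h
    rw [dif_pos rfl] at h
    simp at h

noncomputable instance {p : ℕ} (H : SimpleGraph (Fin p)) (n : Fin p → ℕ)
    (G : ∀ i, SimpleGraph (Fin (n i))) : DecidableRel (H.hJoin n G).Adj :=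
  Classical.decRel _

/-- `μ` is a main eigenvalue of the matrix `A`. -/
def Matrix.IsMainEig {m : ℕ} (A : Matrix (Fin m) (Fin m) ℝ) (μ : ℝ) : Prop :=
  ∃ v : Fin m → ℝ, A *ᵥ v = μ • v ∧ v ⬝ᵥ (fun _ => (1 : ℝ)) ≠ 0

open Polynomial

namespace Matrix

section Krylov

variable {m R : Type*} [Fintype m] [DecidableEq m]

theorem aeval_mulVec_of_mulVec_eq_smul [CommRing R] {A : Matrix m m R} {μ : R} {w : m → R}
    (h : A *ᵥ w = μ • w) (q : R[X]) : aeval A q *ᵥ w = q.eval μ • w := by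
  have := Module.End.aeval_apply_of_mem_apply_eq_smul (f := toLinAlgEquiv' A) (p := q) h
  rwa [aeval_algEquiv] at this

theorem IsSymm.aeval_prod_mainEig_mulVec_one {k : ℕ} {A : Matrix (Fin k) (Fin k) ℝ}
    (hA : A.IsSymm) {S : Finset ℝ} (hS : ∀ μ, A.IsMainEig μ → μ ∈ S) :
    aeval A (∏ μ ∈ S, (X - C μ)) *ᵥ (fun _ => 1) = 0 := by
  have hH : A.IsHermitian := by rwa [IsHermitian, conjTranspose_eq_transpose_of_trivial]
  set b := hH.eigenvectorBasis
  have hone : (fun _ => (1 : ℝ)) = ∑ i, ((b i).ofLp ⬝ᵥ fun _ => 1) • (b i).ofLp := by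
    simpa [EuclideanSpace.inner_eq_star_dotProduct, dotProduct_comm] using
      congrArg WithLp.ofLp (b.sum_repr' (WithLp.toLp 2 fun _ => 1)).symm
  rw [hone, mulVec_sum]
  refine Finset.sum_eq_zero fun i _ => ?_
  rw [mulVec_smul, aeval_mulVec_of_mulVec_eq_smul (hH.mulVec_eigenvectorBasis i)]
  by_cases hi : ((b i).ofLp ⬝ᵥ fun _ => 1) = 0
  · rw [hi, zero_smul]
  · have hroot : (∏ μ ∈ S, (X - C μ)).eval (hH.eigenvalues i) = 0 := by
      rw [eval_prod]
      exact Finset.prod_eq_zero (hS _ ⟨_, hH.mulVec_eigenvectorBasis i, hi⟩) (by simp)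
    rw [hroot, zero_smul, smul_zero]

def krylov [Semiring R] (A : Matrix m m R) (u : m → R) (s : ℕ) : Matrix m (Fin s) R :=
  of fun a k => (A ^ (k : ℕ) *ᵥ u) a

def companion [Zero R] [One R] {s : ℕ} (c : Fin s → R) : Matrix (Fin s) (Fin s) R :=
  of fun k l => if (l : ℕ) = s - 1 then c k else if (k : ℕ) = l + 1 then 1 else 0

theorem krylov_apply_zero [Semiring R] (A : Matrix m m R) (u : m → R) {s : ℕ} (hs : 0 < s)
    (a : m) : krylov A u s a ⟨0, hs⟩ = u a := by
  simp [krylov]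

theorem mul_krylov_eq_krylov_mul_companion [CommSemiring R] (A : Matrix m m R) (u : m → R)
    {s : ℕ} (c : Fin s → R) (h : A ^ s *ᵥ u = ∑ k, c k • (A ^ (k : ℕ) *ᵥ u)) :
    A * krylov A u s = krylov A u s * companion c := by
  ext a l
  have hstep : (A * krylov A u s) a l = (A ^ ((l : ℕ) + 1) *ᵥ u) a := by
    rw [pow_succ', ← mulVec_mulVec]
    rfl
  rw [hstep, mul_apply]
  simp only [krylov, companion, of_apply]
  split_ifs with hl
  · rw [show (l : ℕ) + 1 = s by omega, h]
    simp [Finset.sum_apply, mul_comm]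
  · have hlt : (l : ℕ) + 1 < s := by omega
    rw [Finset.sum_eq_single ⟨(l : ℕ) + 1, hlt⟩]
    · simp
    · intro k _ hk
      rw [if_neg (fun h => hk (Fin.ext h)), mul_zero]
    · simp

theorem pow_mulVec_eq_sum_of_aeval_mulVec_eq_zero [CommRing R] {A : Matrix m m R} {u : m → R}
    {s : ℕ} {c : Fin s → R} (h : aeval A (X ^ s - ∑ k, C (c k) * X ^ (k : ℕ)) *ᵥ u = 0) :
    A ^ s *ᵥ u = ∑ k, c k • (A ^ (k : ℕ) *ᵥ u) := by
  simpa [sub_mulVec, sum_mulVec, sub_eq_zero, ← Algebra.smul_def, smul_mulVec] using h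

theorem pos_of_aeval_mulVec_eq_zero [CommRing R] {A : Matrix m m R} {u : m → R}
    {s : ℕ} {c : Fin s → R} (h : aeval A (X ^ s - ∑ k, C (c k) * X ^ (k : ℕ)) *ᵥ u = 0)
    (hu : u ≠ 0) : 0 < s := by
  rw [Nat.pos_iff_ne_zero]
  rintro rfl
  simp only [pow_zero, Finset.univ_eq_empty, Finset.sum_empty, sub_zero, map_one,
    one_mulVec] at h
  exact hu h

end Krylov

section Eigen

variable {m n K : Type*} [Fintype n]

theorem mulVec_injective_of_rank_eq_card [Field K] {B : Matrix m n K}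
    (h : B.rank = Fintype.card n) : Function.Injective B.mulVec :=
  mulVec_injective_iff.mpr <| linearIndependent_iff_card_eq_finrank_span.mpr <| by
    rw [← h, rank_eq_finrank_span_cols, Set.finrank]

theorem mulVec_eigen_iff_of_mul_eq_mul [Fintype m] [CommSemiring K] {A : Matrix m m K}
    {B : Matrix m n K} {T : Matrix n n K} (hAB : A * B = B * T)
    (hB : Function.Injective B.mulVec) (ρ : K) (α : n → K) :
    (B *ᵥ α ≠ 0 ∧ A *ᵥ (B *ᵥ α) = ρ • (B *ᵥ α)) ↔ (α ≠ 0 ∧ T *ᵥ α = ρ • α) := by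
  rw [hB.ne_iff' (mulVec_zero B), mulVec_mulVec, hAB, ← mulVec_mulVec, ← mulVec_smul,
    hB.eq_iff]

end Eigen

end Matrix

namespace Matrix

variable {ι R : Type*} [Fintype ι] [DecidableEq ι] {m n : ι → Type*} [∀ i, Fintype (n i)]

theorem blockDiagonal'_mulVec_apply [NonUnitalNonAssocSemiring R]
    (W : ∀ i, Matrix (m i) (n i) R) (v : (Σ i, n i) → R) (i : ι) (a : m i) :
    (blockDiagonal' W *ᵥ v) ⟨i, a⟩ = (W i *ᵥ fun k => v ⟨i, k⟩) a := by
  simp only [mulVec, dotProduct, Fintype.sum_sigma, blockDiagonal'_apply]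
  rw [Finset.sum_eq_single i]
  · simp
  · intro j _ hj
    simp [Ne.symm hj]
  · simp

theorem blockDiagonal'_mulVec_injective [NonUnitalNonAssocSemiring R]
    {W : ∀ i, Matrix (m i) (n i) R} (hW : ∀ i, Function.Injective (W i).mulVec) :
    Function.Injective (blockDiagonal' W).mulVec := by
  intro v w hvw
  funext ⟨i, k⟩
  have hblock : (fun k => v ⟨i, k⟩) = fun k => w ⟨i, k⟩ :=
    hW i (funext fun a => by simpa only [blockDiagonal'_mulVec_apply] using congrFun hvw ⟨i, a⟩)
  exact congrFun hblock k

def firstRowBlocks [NonUnitalNonAssocSemiring R] (M : Matrix ι ι R) {s : ι → ℕ}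
    (W : ∀ i, Matrix (n i) (Fin (s i)) R) : Matrix (Σ i, Fin (s i)) (Σ i, Fin (s i)) R :=
  of fun x y => if (x.2 : ℕ) = 0 then M x.1 y.1 * ∑ b, W y.1 b y.2 else 0

theorem submatrix_fst_mul_blockDiagonal' [NonAssocSemiring R] (M : Matrix ι ι R) {s : ι → ℕ}
    (W : ∀ i, Matrix (n i) (Fin (s i)) R) (hW0 : ∀ i a, ∃ h : 0 < s i, W i a ⟨0, h⟩ = 1) :
    (M.submatrix Sigma.fst Sigma.fst : Matrix (Σ i, n i) (Σ i, n i) R) * blockDiagonal' W =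
      blockDiagonal' W * firstRowBlocks M W := by
  ext ⟨i, a⟩ ⟨j, l⟩
  obtain ⟨hs, ha⟩ := hW0 i a
  calc _ = M i j * ∑ b, W j b l := by
        rw [mul_apply, Fintype.sum_sigma, Finset.sum_eq_single j, Finset.mul_sum]
        · simp
        · intro k _ hk
          simp [blockDiagonal'_apply_ne _ _ _ hk]
        · simp
    _ = W i a ⟨0, hs⟩ * (M i j * ∑ b, W j b l) := by rw [ha, one_mul]
    _ = _ := by
        rw [mul_apply, Fintype.sum_sigma, Finset.sum_eq_single i,
          Finset.sum_eq_single (⟨0, hs⟩ : Fin (s i))]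
        · simp [firstRowBlocks]
        · intro k _ hk
          simp [firstRowBlocks, Fin.ext_iff.not.mp hk]
        · simp
        · intro k _ hk
          simp [blockDiagonal'_apply_ne _ _ _ (Ne.symm hk)]
        · simp

end Matrix

namespace SimpleGraph

variable {p : ℕ} (H : SimpleGraph (Fin p)) {n : Fin p → ℕ} (G : ∀ i, SimpleGraph (Fin (n i)))

theorem hJoin_adj_mk_mk {i : Fin p} {a b : Fin (n i)} :
    (H.hJoin n G).Adj ⟨i, a⟩ ⟨i, b⟩ ↔ (G i).Adj a b := by
  simp [hJoin]

theorem hJoin_adj_of_fst_ne {x y : Σ i, Fin (n i)} (h : x.1 ≠ y.1) :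
    (H.hJoin n G).Adj x y ↔ H.Adj x.1 y.1 := by
  simp [hJoin, h]

theorem hJoin_adjMatrix (R : Type*) [NonAssocSemiring R] [DecidableRel H.Adj]
    [∀ i, DecidableRel (G i).Adj] :
    (H.hJoin n G).adjMatrix R = blockDiagonal' (fun i => (G i).adjMatrix R) +
      ((H.adjMatrix R).submatrix Sigma.fst Sigma.fst : Matrix (Σ i, Fin (n i)) _ R) := by
  ext ⟨i, a⟩ ⟨j, b⟩
  rcases eq_or_ne i j with rfl | hij
  · simp [hJoin_adj_mk_mk, blockDiagonal'_apply_eq]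
  · simp [hJoin_adj_of_fst_ne H G (x := ⟨i, a⟩) (y := ⟨j, b⟩) hij,
      blockDiagonal'_apply_ne _ _ _ hij]

variable {R : Type*} [NonAssocSemiring R] [DecidableRel H.Adj] {s : Fin p → ℕ}

def hJoinAssocMatrix (c : ∀ i, Fin (s i) → R) (W : ∀ i, Matrix (Fin (n i)) (Fin (s i)) R) :
    Matrix (Σ i, Fin (s i)) (Σ i, Fin (s i)) R :=
  blockDiagonal' (fun i => companion (c i)) + (H.adjMatrix R).firstRowBlocks W

theorem hJoinAssocMatrix_apply (c : ∀ i, Fin (s i) → R)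
    (W : ∀ i, Matrix (Fin (n i)) (Fin (s i)) R) (x y : Σ i, Fin (s i)) :
    H.hJoinAssocMatrix c W x y =
      if x.1 = y.1 then
        (if (y.2 : ℕ) = s x.1 - 1 then c x.1 x.2
         else if (x.2 : ℕ) = (y.2 : ℕ) + 1 then 1 else 0)
      else if H.Adj x.1 y.1 then
        (if (x.2 : ℕ) = 0 then ∑ a, W y.1 a y.2 else 0)
      else 0 := by
  obtain ⟨i, k⟩ := x
  obtain ⟨j, l⟩ := y
  rcases eq_or_ne i j with rfl | hij
  · simp [hJoinAssocMatrix, firstRowBlocks, companion, blockDiagonal'_apply_eq]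
  · by_cases hadj : H.Adj i j <;>
      simp [hJoinAssocMatrix, firstRowBlocks, blockDiagonal'_apply_ne _ _ _ hij, hij, hadj]

theorem hJoin_adjMatrix_mul_blockDiagonal' [∀ i, DecidableRel (G i).Adj]
    (c : ∀ i, Fin (s i) → R) (W : ∀ i, Matrix (Fin (n i)) (Fin (s i)) R)
    (hW : ∀ i, (G i).adjMatrix R * W i = W i * companion (c i))
    (hW0 : ∀ i a, ∃ h : 0 < s i, W i a ⟨0, h⟩ = 1) :
    (H.hJoin n G).adjMatrix R * blockDiagonal' W = blockDiagonal' W * H.hJoinAssocMatrix c W := by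
  rw [hJoin_adjMatrix, hJoinAssocMatrix, Matrix.add_mul, Matrix.mul_add, ← blockDiagonal'_mul,
    ← blockDiagonal'_mul, submatrix_fst_mul_blockDiagonal' _ W hW0]
  simp_rw [hW]

end SimpleGraph

open Polynomial in
theorem hJoin_assocMatrix_eigenvector_iff_general {p : ℕ} (H : SimpleGraph (Fin p))
    [DecidableRel H.Adj] (n : Fin p → ℕ) (G : ∀ i, SimpleGraph (Fin (n i)))
    [∀ i, DecidableRel (G i).Adj]
    -- `s i` is the number of distinct main eigenvalues of `G i`
    (s : Fin p → ℕ)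
    -- `Wmat i` is the walk matrix of `G i`, of full column rank
    (Wmat : ∀ i, Matrix (Fin (n i)) (Fin (s i)) ℝ)
    (hWmat : ∀ i a k, Wmat i a k = (((G i).adjMatrix ℝ ^ (k : ℕ)) *ᵥ fun _ => (1 : ℝ)) a)
    (hrank : ∀ i, (Wmat i).rank = s i)
    -- `c i` lists the coefficients of the main characteristic polynomial of `G i`
    (S : Fin p → Finset ℝ) (hS : ∀ i μ, μ ∈ S i ↔ ((G i).adjMatrix ℝ).IsMainEig μ)
    (c : ∀ i, Fin (s i) → ℝ)
    (hc : ∀ i, ∏ μ ∈ S i, (X - C μ) =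
      X ^ (s i) - ∑ k : Fin (s i), C (c i k) * X ^ (k : ℕ))
    -- `Wt` is the `H`-join associated matrix `W̃`
    (Wt : Matrix ((i : Fin p) × Fin (s i)) ((i : Fin p) × Fin (s i)) ℝ)
    (hWt : ∀ x y, Wt x y =
      if x.1 = y.1 then
        -- companion matrix `C(m_{G_{x.1}})`
        (if (y.2 : ℕ) = s x.1 - 1 then c x.1 x.2
         else if (x.2 : ℕ) = (y.2 : ℕ) + 1 then 1 else 0)
      else if H.Adj x.1 y.1 then
        -- `M_{x.1, y.1}`: first row `jᵀ W_{G_{y.1}}`, zeros elsewhere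
        (if (x.2 : ℕ) = 0 then ∑ a, Wmat y.1 a y.2 else 0)
      else 0) :
    ∀ (ρ : ℝ) (α : ((i : Fin p) × Fin (s i)) → ℝ)
      (v : ((i : Fin p) × Fin (n i)) → ℝ)
      (hv : v = fun x => ∑ k : Fin (s x.1), Wmat x.1 x.2 k * α ⟨x.1, k⟩),
      (v ≠ 0 ∧ (H.hJoin n G).adjMatrix ℝ *ᵥ v = ρ • v) ↔
        (α ≠ 0 ∧ Wt *ᵥ α = ρ • α) := by
  intro ρ α v hv
  have hann : ∀ i, aeval ((G i).adjMatrix ℝ) (X ^ s i - ∑ k, C (c i k) * X ^ (k : ℕ)) *ᵥ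
      (fun _ => 1) = 0 := fun i =>
    hc i ▸ (G i).isSymm_adjMatrix.aeval_prod_mainEig_mulVec_one fun μ => (hS i μ).2
  have hkrylov : ∀ i, Wmat i = krylov ((G i).adjMatrix ℝ) (fun _ => 1) (s i) :=
    fun i => ext (hWmat i)
  have hv' : v = blockDiagonal' Wmat *ᵥ α := by
    funext ⟨i, a⟩
    rw [hv, blockDiagonal'_mulVec_apply]
    rfl
  have hWt' : Wt = H.hJoinAssocMatrix c Wmat := by
    ext x y
    rw [hWt, SimpleGraph.hJoinAssocMatrix_apply]
  subst hv' hWt'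
  refine mulVec_eigen_iff_of_mul_eq_mul ?_ (blockDiagonal'_mulVec_injective fun i =>
    mulVec_injective_of_rank_eq_card ((hrank i).trans (Fintype.card_fin _).symm)) ρ α
  refine H.hJoin_adjMatrix_mul_blockDiagonal' G c Wmat (fun i => ?_) (fun i a => ?_)
  · rw [hkrylov i]
    exact mul_krylov_eq_krylov_mul_companion _ _ _
      (pow_mulVec_eq_sum_of_aeval_mulVec_eq_zero (hann i))
  · have hs := pos_of_aeval_mulVec_eq_zero (hann i) (Function.ne_iff.mpr ⟨a, one_ne_zero⟩)
    exact ⟨hs, by rw [hkrylov i, krylov_apply_zero]⟩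

open Polynomial in
/-- A vector `v` whose `i`-th block is `v_i = W_{G_i} α_i` is an eigenvector of the
adjacency matrix of the `H`-join for the eigenvalue `ρ` iff `(α_1, …, α_p)` is an
eigenvector of the associated matrix `W̃` for `ρ`. -/
theorem hJoin_assocMatrix_eigenvector_iff {p : ℕ} (H : SimpleGraph (Fin p))
    [DecidableRel H.Adj] (n : Fin p → ℕ) (G : ∀ i, SimpleGraph (Fin (n i)))
    [∀ i, DecidableRel (G i).Adj]
    -- `s i` is the number of distinct main eigenvalues of `G i`
    (s : Fin p → ℕ) (hs : ∀ i, s i = {μ : ℝ | ((G i).adjMatrix ℝ).IsMainEig μ}.ncard)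
    -- `Wmat i` is the walk matrix of `G i`, of full column rank
    (Wmat : ∀ i, Matrix (Fin (n i)) (Fin (s i)) ℝ)
    (hWmat : ∀ i a k, Wmat i a k = (((G i).adjMatrix ℝ ^ (k : ℕ)) *ᵥ fun _ => (1 : ℝ)) a)
    (hrank : ∀ i, (Wmat i).rank = s i)
    -- `c i` lists the coefficients of the main characteristic polynomial of `G i`
    (S : Fin p → Finset ℝ) (hS : ∀ i μ, μ ∈ S i ↔ ((G i).adjMatrix ℝ).IsMainEig μ)
    (c : ∀ i, Fin (s i) → ℝ)
    (hc : ∀ i, ∏ μ ∈ S i, (X - C μ) =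
      X ^ (s i) - ∑ k : Fin (s i), C (c i k) * X ^ (k : ℕ))
    -- `Wt` is the `H`-join associated matrix `W̃`
    (Wt : Matrix ((i : Fin p) × Fin (s i)) ((i : Fin p) × Fin (s i)) ℝ)
    (hWt : ∀ x y, Wt x y =
      if x.1 = y.1 then
        -- companion matrix `C(m_{G_{x.1}})`
        (if (y.2 : ℕ) = s x.1 - 1 then c x.1 x.2
         else if (x.2 : ℕ) = (y.2 : ℕ) + 1 then 1 else 0)
      else if H.Adj x.1 y.1 then
        -- `M_{x.1, y.1}`: first row `jᵀ W_{G_{y.1}}`, zeros elsewhere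
        (if (x.2 : ℕ) = 0 then ∑ a, Wmat y.1 a y.2 else 0)
      else 0) :
    ∀ (ρ : ℝ) (α : ((i : Fin p) × Fin (s i)) → ℝ)
      (v : ((i : Fin p) × Fin (n i)) → ℝ)
      (hv : v = fun x => ∑ k : Fin (s x.1), Wmat x.1 x.2 k * α ⟨x.1, k⟩),
      (v ≠ 0 ∧ (H.hJoin n G).adjMatrix ℝ *ᵥ v = ρ • v) ↔
        (α ≠ 0 ∧ Wt *ᵥ α = ρ • α) :=
  hJoin_assocMatrix_eigenvector_iff_general H n G s Wmat hWmat hrank S hS c hc Wt hWt
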